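/- Let g be a pseudo-Riemannian metric in coordinates on M, let V be a connected relatively open subset of Ū meeting {x_0 = 0}, and suppose (ρ, h) and (ρ', h') are two pairs consisting of a local defining function on V together with a smooth symmetric-matrix-valued map on V, both nondegenerate on {v ∈ ℝ^N : v_0 = 0} along V ∩ {x_0 = 0}, such that on V ∩ M one has g_{ij} = C ρ^{−2}(∂_i ρ)(∂_j ρ) + ρ^{−1} h_{ij} and g_{ij} = C ρ'^{−2}(∂_i ρ')(∂_j ρ') + ρ'^{−1} h'_{ij} for the same constant C ≠ 0. Then there is a smooth positive function f on V ∩ {x_0 = 0} such that Σ_{i,j} h'_{ij}(y) v_i w_j = f(y) · Σ_{i,j} h_{ij}(y) v_i w_j for every y ∈ V ∩ {x_0 = 0} and all v, w ∈ ℝ^N with v_0 = w_0 = 0; i.e. the conformal class of the boundary restriction of h is independent of the choice of defining function, and defines a canonical conformal structure on the boundary. -/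

import Mathlib

noncomputable section

/-- Kronecker delta on `Fin N`. -/
def kron {N : ℕ} (i j : Fin N) : ℝ := if i = j then 1 else 0

/-- `i`-th coordinate partial derivative of a real-valued function on `ℝ^N`. -/
def pd {N : ℕ} (i : Fin N) (f : (Fin N → ℝ) → ℝ) (x : Fin N → ℝ) : ℝ :=
  fderiv ℝ f x (Pi.single i 1)

/-- Convention: `Γ x i j k` denotes the Christoffel symbol `Γ^k_{ij}` at `x`.
The trace `γ_i := Σ_k Γ^k_{ik}`. -/
def christTrace {N : ℕ} (Γ : (Fin N → ℝ) → Fin N → Fin N → Fin N → ℝ)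
    (x : Fin N → ℝ) (i : Fin N) : ℝ :=
  ∑ k, Γ x i k k

/-- Tracefree part `Ψ^k_{ij} := Γ^k_{ij} − (1/(N+1))(γ_i δ^k_j + γ_j δ^k_i)`. -/
def tracefree {N : ℕ} (Γ : (Fin N → ℝ) → Fin N → Fin N → Fin N → ℝ)
    (x : Fin N → ℝ) (i j k : Fin N) : ℝ :=
  Γ x i j k - (1 / ((N : ℝ) + 1)) *
    (christTrace Γ x i * kron j k + christTrace Γ x j * kron i k)

/-- Projective modification of `Γ` by the one-form `Υ`:
`Γ^k_{ij} + Υ_i δ^k_j + Υ_j δ^k_i`. -/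
def pmod {N : ℕ} (Γ : (Fin N → ℝ) → Fin N → Fin N → Fin N → ℝ)
    (Υ : (Fin N → ℝ) → Fin N → ℝ) (x : Fin N → ℝ) (i j k : Fin N) : ℝ :=
  Γ x i j k + Υ x i * kron j k + Υ x j * kron i k

/-- A Christoffel symbol field on a set `V`: smooth on `V` and symmetric in the
lower indices. -/
def IsChristoffelOn {N : ℕ} (V : Set (Fin N → ℝ))
    (Γ : (Fin N → ℝ) → Fin N → Fin N → Fin N → ℝ) : Prop :=
  ContDiffOn ℝ (⊤ : ℕ∞) Γ V ∧ ∀ x ∈ V, ∀ i j k, Γ x i j k = Γ x j i k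

/-- A pseudo-Riemannian metric in coordinates on `V`, given with its inverse:
`g` is smooth on `V`, symmetric, and `ginv` is a (smooth) pointwise inverse of `g`. -/
def IsMetricOn {N : ℕ} (V : Set (Fin N → ℝ))
    (g ginv : (Fin N → ℝ) → Fin N → Fin N → ℝ) : Prop :=
  ContDiffOn ℝ (⊤ : ℕ∞) g V ∧ ContDiffOn ℝ (⊤ : ℕ∞) ginv V ∧
    (∀ x ∈ V, ∀ i j, g x i j = g x j i) ∧
    (∀ x ∈ V, ∀ i j, (∑ l, g x i l * ginv x l j) = kron i j)

/-- Levi-Civita Christoffel symbols of `g`: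
`Γ^k_{ij} = (1/2) Σ_l g^{kl}(∂_i g_{jl} + ∂_j g_{il} − ∂_l g_{ij})`.
Convention: `LC g ginv x i j k = Γ^k_{ij}(x)`. -/
def LC {N : ℕ} (g ginv : (Fin N → ℝ) → Fin N → Fin N → ℝ)
    (x : Fin N → ℝ) (i j k : Fin N) : ℝ :=
  (1 / 2 : ℝ) * ∑ l, ginv x k l *
    (pd i (fun y => g y j l) x + pd j (fun y => g y i l) x - pd l (fun y => g y i j) x)

/-- Ricci curvature
`Ric_{ij} = Σ_k ∂_k Γ^k_{ij} − Σ_k ∂_j Γ^k_{ki} + Σ_{k,l}(Γ^k_{kl} Γ^l_{ij} − Γ^k_{jl} Γ^l_{ki})`. -/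
def Ricci {N : ℕ} (g ginv : (Fin N → ℝ) → Fin N → Fin N → ℝ)
    (x : Fin N → ℝ) (i j : Fin N) : ℝ :=
  (∑ k, pd k (fun y => LC g ginv y i j k) x)
    - (∑ k, pd j (fun y => LC g ginv y k i k) x)
    + ∑ k, ∑ l,
        (LC g ginv x k l k * LC g ginv x i j l - LC g ginv x j l k * LC g ginv x k i l)

/-- Scalar curvature `S = Σ_{i,j} g^{ij} Ric_{ij}`. -/
def scal {N : ℕ} (g ginv : (Fin N → ℝ) → Fin N → Fin N → ℝ) (x : Fin N → ℝ) : ℝ :=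
  ∑ i, ∑ j, ginv x i j * Ricci g ginv x i j

/-- `|det g(x)|`. -/
def absDet {N : ℕ} (g : (Fin N → ℝ) → Fin N → Fin N → ℝ) (x : Fin N → ℝ) : ℝ :=
  |(Matrix.of (g x)).det|

/-- `τ(x) := |det g(x)|^{−1/(N+1)}`. -/
def tau {N : ℕ} (g : (Fin N → ℝ) → Fin N → Fin N → ℝ) (x : Fin N → ℝ) : ℝ :=
  absDet g x ^ (-(1 : ℝ) / ((N : ℝ) + 1))

/-- `M = U ∩ {x_0 > 0}`. -/
def Mset {N : ℕ} [NeZero N] (U : Set (Fin N → ℝ)) : Set (Fin N → ℝ) :=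
  {x | x ∈ U ∧ 0 < x 0}

/-- `Ū = U ∩ {x_0 ≥ 0}`. -/
def Uclo {N : ℕ} [NeZero N] (U : Set (Fin N → ℝ)) : Set (Fin N → ℝ) :=
  {x | x ∈ U ∧ 0 ≤ x 0}

/-- The boundary `U ∩ {x_0 = 0}`. -/
def Bdry {N : ℕ} [NeZero N] (U : Set (Fin N → ℝ)) : Set (Fin N → ℝ) :=
  {x | x ∈ U ∧ x 0 = 0}

/-- `V` is a relatively open neighborhood of `x` in `A`. -/
def RelOpenNbhd {N : ℕ} (A V : Set (Fin N → ℝ)) (x : Fin N → ℝ) : Prop :=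
  x ∈ V ∧ ∃ O : Set (Fin N → ℝ), IsOpen O ∧ V = O ∩ A

/-- A local defining function for the boundary on a relatively open subset `V` of `Ū`:
smooth on `V`, positive on `V ∩ {x_0 > 0}`, zero on `V ∩ {x_0 = 0}`, with nonvanishing
differential along `V ∩ {x_0 = 0}`. -/
def IsDefiningFnOn {N : ℕ} [NeZero N] (V : Set (Fin N → ℝ)) (r : (Fin N → ℝ) → ℝ) : Prop :=
  ContDiffOn ℝ (⊤ : ℕ∞) r V ∧ (∀ y ∈ V, 0 < y 0 → 0 < r y) ∧
    (∀ y ∈ V, y 0 = 0 → r y = 0) ∧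
    ∀ y ∈ V, y 0 = 0 → fderivWithin ℝ r V y ≠ 0

/-! Restrict both asymptotic forms of `g_ij`, for tangential `i, j ≠ 0`, to the ray
`t ↦ y + t e₀` entering the interior from a boundary point `y`, and multiply by `ρ`. Since `ρ`
vanishes on the boundary, its tangential derivatives are `O(t)` while `ρ ~ (∂₀ρ)(y) t` with
`(∂₀ρ)(y) > 0`, so the cross term `C ∂ᵢρ ∂ⱼρ / ρ` tends to `0` and `ρ g_ij → h_ij(y)`.
Likewise `ρ' g_ij → h'_ij(y)`, and `ρ / ρ' → (∂₀ρ)(y) / (∂₀ρ')(y)`; comparing the limits gives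
`h' = f h` on tangential vectors with `f = ∂₀ρ' / ∂₀ρ`, smooth and positive along the boundary. -/

open Filter Set Topology

theorem tendsto_add_smul_nhds_zero {E : Type*} [NormedAddCommGroup E] [NormedSpace ℝ E]
    (y u : E) : Tendsto (fun t : ℝ => y + t • u) (𝓝 0) (𝓝 y) := by
  simpa using (by fun_prop : Continuous fun t : ℝ => y + t • u).tendsto 0

theorem tendsto_div_of_hasFDerivWithinAt {E : Type*} [NormedAddCommGroup E] [NormedSpace ℝ E]
    {f : E → ℝ} {L : E →L[ℝ] ℝ} {s : Set E} {y u : E} (hf : HasFDerivWithinAt f L s y)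
    (hfy : f y = 0) (hu : ∀ᶠ t in 𝓝[>] (0 : ℝ), y + t • u ∈ s) :
    Tendsto (fun t : ℝ => f (y + t • u) / t) (𝓝[>] 0) (𝓝 (L u)) := by
  have hlim := hf.lim (c := fun t : ℝ => t⁻¹) (d := fun t => t • u)
    (by simpa using (tendsto_add_smul_nhds_zero 0 u).mono_left nhdsWithin_le_nhds) hu
    (tendsto_const_nhds.congr' (by
      filter_upwards [self_mem_nhdsWithin] with t (ht : 0 < t)
      rw [smul_smul, inv_mul_cancel₀ ht.ne', one_smul]))
  simpa [hfy, div_eq_inv_mul] using hlim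

section HalfSpace

variable {N : ℕ} [NeZero N] {W : Set (Fin N → ℝ)}

theorem Mset_subset_Uclo : Mset W ⊆ Uclo W := fun _ hx => ⟨hx.1, hx.2.le⟩

theorem isOpen_Mset (hW : IsOpen W) : IsOpen (Mset W) :=
  hW.inter (isOpen_lt continuous_const (continuous_apply (0 : Fin N)))

theorem uniqueDiffOn_Uclo (hW : IsOpen W) : UniqueDiffOn ℝ (Uclo W) := by
  have hopen : IsOpen {x : Fin N → ℝ | 0 < x 0} := isOpen_lt continuous_const (continuous_apply 0)
  have hH : UniqueDiffOn ℝ {x : Fin N → ℝ | 0 ≤ x 0} :=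
    uniqueDiffOn_convex (convex_halfSpace_ge ⟨fun _ _ => rfl, fun _ _ => rfl⟩ 0)
      ⟨Pi.single 0 1, (hopen.subset_interior_iff (t := {x | 0 ≤ x 0})).2 (fun _ hx => le_of_lt hx)
        (by simp : (0 : ℝ) < (Pi.single 0 1 : Fin N → ℝ) 0)⟩
  intro x hx
  rw [show Uclo W = {x | 0 ≤ x 0} ∩ W from Set.inter_comm _ _]
  exact (hH x hx.2).inter (hW.mem_nhds hx.1)

variable {y : Fin N → ℝ}

theorem eventually_add_smul_single_mem_Bdry (hW : IsOpen W) (hy : y ∈ Bdry W) {i : Fin N}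
    (hi : i ≠ 0) :
    ∀ᶠ t in 𝓝 (0 : ℝ), y + t • Pi.single i 1 ∈ Bdry W := by
  filter_upwards [tendsto_add_smul_nhds_zero y _ (hW.mem_nhds hy.1)] with t ht
  exact ⟨ht, by simp [hy.2, hi.symm]⟩

theorem eventually_add_smul_single_mem_Mset (hW : IsOpen W) (hy : y ∈ Bdry W) :
    ∀ᶠ t in 𝓝[>] (0 : ℝ), y + t • Pi.single 0 1 ∈ Mset W := by
  filter_upwards [nhdsWithin_le_nhds (tendsto_add_smul_nhds_zero y _ (hW.mem_nhds hy.1)),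
    self_mem_nhdsWithin]
    with t ht (ht0 : 0 < t)
  exact ⟨ht, by simpa [hy.2] using ht0⟩

end HalfSpace

def normalDeriv {N : ℕ} [NeZero N] (V : Set (Fin N → ℝ)) (ρ : (Fin N → ℝ) → ℝ)
    (y : Fin N → ℝ) : ℝ :=
  fderivWithin ℝ ρ V y (Pi.single 0 1)

namespace IsDefiningFnOn

variable {N : ℕ} [NeZero N] {W : Set (Fin N → ℝ)} {ρ : (Fin N → ℝ) → ℝ} {y : Fin N → ℝ}

theorem hasFDerivWithinAt (hρ : IsDefiningFnOn (Uclo W) ρ) {x : Fin N → ℝ}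
    (hx : x ∈ Uclo W) : HasFDerivWithinAt ρ (fderivWithin ℝ ρ (Uclo W) x) (Uclo W) x :=
  ((hρ.1.differentiableOn (by simp)) x hx).hasFDerivWithinAt

theorem fderivWithin_single_eq_zero (hW : IsOpen W) (hρ : IsDefiningFnOn (Uclo W) ρ)
    (hy : y ∈ Bdry W) {i : Fin N} (hi : i ≠ 0) :
    fderivWithin ℝ ρ (Uclo W) y (Pi.single i 1) = 0 := by
  have hBdry := eventually_add_smul_single_mem_Bdry hW hy hi
  have hlim := tendsto_div_of_hasFDerivWithinAt (hρ.hasFDerivWithinAt ⟨hy.1, hy.2.ge⟩)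
    (hρ.2.2.1 y ⟨hy.1, hy.2.ge⟩ hy.2)
    (nhdsWithin_le_nhds (hBdry.mono fun t ht => ⟨ht.1, ht.2.ge⟩))
  refine tendsto_nhds_unique hlim (tendsto_const_nhds.congr' ?_)
  filter_upwards [nhdsWithin_le_nhds hBdry] with t ht
  rw [hρ.2.2.1 _ ⟨ht.1, ht.2.ge⟩ ht.2, zero_div]

theorem tendsto_div_normalDeriv (hW : IsOpen W) (hρ : IsDefiningFnOn (Uclo W) ρ)
    (hy : y ∈ Bdry W) :
    Tendsto (fun t : ℝ => ρ (y + t • Pi.single 0 1) / t) (𝓝[>] 0)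
      (𝓝 (normalDeriv (Uclo W) ρ y)) :=
  tendsto_div_of_hasFDerivWithinAt (hρ.hasFDerivWithinAt ⟨hy.1, hy.2.ge⟩)
    (hρ.2.2.1 y ⟨hy.1, hy.2.ge⟩ hy.2)
    ((eventually_add_smul_single_mem_Mset hW hy).mono fun _ ht => Mset_subset_Uclo ht)

theorem normalDeriv_pos (hW : IsOpen W) (hρ : IsDefiningFnOn (Uclo W) ρ) (hy : y ∈ Bdry W) :
    0 < normalDeriv (Uclo W) ρ y := by
  have hnonneg : 0 ≤ normalDeriv (Uclo W) ρ y := by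
    refine ge_of_tendsto (hρ.tendsto_div_normalDeriv hW hy) ?_
    filter_upwards [eventually_add_smul_single_mem_Mset hW hy, self_mem_nhdsWithin]
      with t ht (ht0 : 0 < t)
    exact (div_pos (hρ.2.1 _ (Mset_subset_Uclo ht) ht.2) ht0).le
  refine hnonneg.lt_of_ne fun hzero => hρ.2.2.2 y ⟨hy.1, hy.2.ge⟩ hy.2 ?_
  -- the differential vanishes on the tangential basis vectors, and `hzero` on the normal one
  refine ContinuousLinearMap.coe_injective ((Pi.basisFun ℝ (Fin N)).ext fun i => ?_)
  rcases eq_or_ne i 0 with rfl | hi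
  · simpa [normalDeriv] using hzero.symm
  · simpa using hρ.fderivWithin_single_eq_zero hW hy hi

theorem contDiffOn_fderivWithin_apply (hW : IsOpen W) (hρ : IsDefiningFnOn (Uclo W) ρ)
    (u : Fin N → ℝ) : ContDiffOn ℝ (⊤ : ℕ∞) (fun x => fderivWithin ℝ ρ (Uclo W) x u) (Uclo W) :=
  (hρ.1.fderivWithin (uniqueDiffOn_Uclo hW) (by norm_cast)).clm_apply contDiffOn_const

theorem exists_tendsto_pd_div (hW : IsOpen W) (hρ : IsDefiningFnOn (Uclo W) ρ)
    (hy : y ∈ Bdry W) {i : Fin N} (hi : i ≠ 0) :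
    ∃ b, Tendsto (fun t : ℝ => pd i ρ (y + t • Pi.single 0 1) / t) (𝓝[>] 0) (𝓝 b) := by
  have hdiff := (hρ.contDiffOn_fderivWithin_apply hW (Pi.single i 1)).differentiableOn
    (by simp) y ⟨hy.1, hy.2.ge⟩
  have hMset := eventually_add_smul_single_mem_Mset hW hy
  refine ⟨_, (tendsto_div_of_hasFDerivWithinAt hdiff.hasFDerivWithinAt
    (hρ.fderivWithin_single_eq_zero hW hy hi)
    (hMset.mono fun _ ht => Mset_subset_Uclo ht)).congr' ?_⟩
  filter_upwards [hMset] with t ht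
  rw [fderivWithin_of_mem_nhds
    (mem_of_superset ((isOpen_Mset hW).mem_nhds ht) Mset_subset_Uclo)]
  rfl

theorem tendsto_mul_of_eq_asymptoticForm (hW : IsOpen W) (hρ : IsDefiningFnOn (Uclo W) ρ)
    (hy : y ∈ Bdry W) {C : ℝ} {g k : (Fin N → ℝ) → ℝ} (hk : ContinuousWithinAt k (Uclo W) y)
    {i j : Fin N} (hi : i ≠ 0) (hj : j ≠ 0)
    (hform : ∀ z ∈ Mset W, g z = C / (ρ z) ^ 2 * pd i ρ z * pd j ρ z + k z / ρ z) :
    Tendsto (fun t : ℝ => ρ (y + t • Pi.single 0 1) * g (y + t • Pi.single 0 1)) (𝓝[>] 0)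
      (𝓝 (k y)) := by
  obtain ⟨bi, hbi⟩ := hρ.exists_tendsto_pd_div hW hy hi
  obtain ⟨bj, hbj⟩ := hρ.exists_tendsto_pd_div hW hy hj
  have hMset := eventually_add_smul_single_mem_Mset hW hy
  have hinv : Tendsto (fun t : ℝ => t / ρ (y + t • Pi.single 0 1)) (𝓝[>] 0)
      (𝓝 (normalDeriv (Uclo W) ρ y)⁻¹) := by
    simpa [inv_div] using (hρ.tendsto_div_normalDeriv hW hy).inv₀ (hρ.normalDeriv_pos hW hy).ne'
  have hray : Tendsto (fun t : ℝ => y + t • Pi.single 0 1) (𝓝[>] 0) (𝓝[Uclo W] y) := by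
    exact tendsto_nhdsWithin_iff.2 ⟨(tendsto_add_smul_nhds_zero y _).mono_left nhdsWithin_le_nhds,
      hMset.mono fun _ ht => Mset_subset_Uclo ht⟩
  have ht : Tendsto (fun t : ℝ => t) (𝓝[>] 0) (𝓝 0) := tendsto_id.mono_left nhdsWithin_le_nhds
  -- the cross term is `C · (∂ᵢρ / t) (∂ⱼρ / t) · t · (t / ρ)`; `∂ᵢρ, ∂ⱼρ` vanish at the boundary
  have hlim := ((((hbi.mul hbj).mul ht).mul hinv).const_mul C).add (hk.tendsto.comp hray)
  rw [mul_zero, zero_mul, mul_zero, zero_add] at hlim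
  refine hlim.congr' ?_
  filter_upwards [hMset, self_mem_nhdsWithin] with t hz (ht0 : 0 < t)
  have hρz := hρ.2.1 _ (Mset_subset_Uclo hz) hz.2
  rw [hform _ hz, Function.comp_apply]
  field_simp

end IsDefiningFnOn

theorem eq_normalDeriv_div_mul_of_asymptoticForm {N : ℕ} [NeZero N] {W : Set (Fin N → ℝ)}
    (hW : IsOpen W) {ρ ρ' g k k' : (Fin N → ℝ) → ℝ} (hρ : IsDefiningFnOn (Uclo W) ρ)
    (hρ' : IsDefiningFnOn (Uclo W) ρ') {y : Fin N → ℝ} (hy : y ∈ Bdry W) {C : ℝ}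
    (hk : ContinuousWithinAt k (Uclo W) y) (hk' : ContinuousWithinAt k' (Uclo W) y)
    {i j : Fin N} (hi : i ≠ 0) (hj : j ≠ 0)
    (hform : ∀ z ∈ Mset W, g z = C / (ρ z) ^ 2 * pd i ρ z * pd j ρ z + k z / ρ z)
    (hform' : ∀ z ∈ Mset W, g z = C / (ρ' z) ^ 2 * pd i ρ' z * pd j ρ' z + k' z / ρ' z) :
    k' y = normalDeriv (Uclo W) ρ' y / normalDeriv (Uclo W) ρ y * k y := by
  have hMset := eventually_add_smul_single_mem_Mset hW hy
  have hlim := hρ.tendsto_mul_of_eq_asymptoticForm hW hy hk hi hj hform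
  -- `ρ g = (ρ / t) / (ρ' / t) · ρ' g`
  have hlim' : Tendsto (fun t : ℝ => ρ (y + t • Pi.single 0 1) * g (y + t • Pi.single 0 1))
      (𝓝[>] 0) (𝓝 (normalDeriv (Uclo W) ρ y / normalDeriv (Uclo W) ρ' y * k' y)) := by
    refine (((hρ.tendsto_div_normalDeriv hW hy).div (hρ'.tendsto_div_normalDeriv hW hy)
      (hρ'.normalDeriv_pos hW hy).ne').mul
      (hρ'.tendsto_mul_of_eq_asymptoticForm hW hy hk' hi hj hform')).congr' ?_
    filter_upwards [hMset, self_mem_nhdsWithin] with t hz (ht0 : 0 < t)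
    have hρz := hρ'.2.1 _ (Mset_subset_Uclo hz) hz.2
    simp only [Pi.div_apply]
    field_simp
  have ha := (hρ.normalDeriv_pos hW hy).ne'
  have ha' := (hρ'.normalDeriv_pos hW hy).ne'
  rw [tendsto_nhds_unique hlim hlim']
  field_simp

theorem sum_sum_mul_mul_eq_mul_of_forall_ne_zero {N : ℕ} [NeZero N]
    {B B' : Fin N → Fin N → ℝ} {c : ℝ} (hB : ∀ i j, i ≠ 0 → j ≠ 0 → B' i j = c * B i j)
    {v w : Fin N → ℝ} (hv : v 0 = 0) (hw : w 0 = 0) :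
    ∑ i, ∑ j, B' i j * v i * w j = c * ∑ i, ∑ j, B i j * v i * w j := by
  simp only [Finset.mul_sum]
  refine Finset.sum_congr rfl fun i _ => Finset.sum_congr rfl fun j _ => ?_
  rcases eq_or_ne i 0 with rfl | hi
  · simp [hv]
  rcases eq_or_ne j 0 with rfl | hj
  · simp [hw]
  rw [hB i j hi hj]
  ring

theorem stmt15_general {N : ℕ} [NeZero N] (U : Set (Fin N → ℝ)) (hU : IsOpen U)
    (g : (Fin N → ℝ) → Fin N → Fin N → ℝ)
    (V : Set (Fin N → ℝ))
    (hVopen : ∃ O : Set (Fin N → ℝ), IsOpen O ∧ V = O ∩ Uclo U)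
    (C : ℝ)
    (ρ ρ' : (Fin N → ℝ) → ℝ) (hρ : IsDefiningFnOn V ρ) (hρ' : IsDefiningFnOn V ρ')
    (h h' : (Fin N → ℝ) → Fin N → Fin N → ℝ)
    (hh : ContDiffOn ℝ (⊤ : ℕ∞) h V) (hh' : ContDiffOn ℝ (⊤ : ℕ∞) h' V)
    (hform : ∀ y ∈ V ∩ Mset U, ∀ i j,
      g y i j = C / (ρ y) ^ 2 * pd i ρ y * pd j ρ y + h y i j / ρ y)
    (hform' : ∀ y ∈ V ∩ Mset U, ∀ i j,
      g y i j = C / (ρ' y) ^ 2 * pd i ρ' y * pd j ρ' y + h' y i j / ρ' y) :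
    ∃ f : (Fin N → ℝ) → ℝ, ContDiffOn ℝ (⊤ : ℕ∞) f {y ∈ V | y 0 = 0} ∧
      (∀ y ∈ V, y 0 = 0 → 0 < f y) ∧
      ∀ y ∈ V, y 0 = 0 → ∀ v w : Fin N → ℝ, v 0 = 0 → w 0 = 0 →
        (∑ i, ∑ j, h' y i j * v i * w j) = f y * ∑ i, ∑ j, h y i j * v i * w j := by
  obtain ⟨O, hO, hVO⟩ := hVopen
  have hV : V = Uclo (O ∩ U) := hVO.trans (Set.ext fun _ => and_assoc.symm)
  subst hV
  have hW : IsOpen (O ∩ U) := hO.inter hU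
  have hcomp : ∀ {k : (Fin N → ℝ) → Fin N → Fin N → ℝ}, ContDiffOn ℝ (⊤ : ℕ∞) k (Uclo (O ∩ U)) →
      ∀ y ∈ Uclo (O ∩ U), ∀ i j, ContinuousWithinAt (fun z => k z i j) (Uclo (O ∩ U)) y :=
    fun hk y hy i j => continuousWithinAt_pi.1 (continuousWithinAt_pi.1 (hk.continuousOn y hy) i) j
  have hMset : ∀ z ∈ Mset (O ∩ U), z ∈ Uclo (O ∩ U) ∩ Mset U :=
    fun z hz => ⟨Mset_subset_Uclo hz, hz.1.2, hz.2⟩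
  refine ⟨fun y => normalDeriv (Uclo (O ∩ U)) ρ' y / normalDeriv (Uclo (O ∩ U)) ρ y, ?_,
    fun y hy hy0 => div_pos (hρ'.normalDeriv_pos hW ⟨hy.1, hy0⟩)
      (hρ.normalDeriv_pos hW ⟨hy.1, hy0⟩), ?_⟩
  · exact ((hρ'.contDiffOn_fderivWithin_apply hW _).mono fun _ hy => hy.1).div
      ((hρ.contDiffOn_fderivWithin_apply hW _).mono fun _ hy => hy.1)
      fun y hy => (hρ.normalDeriv_pos hW ⟨hy.1.1, hy.2⟩).ne'
  · intro y hy hy0 v w hv hw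
    refine sum_sum_mul_mul_eq_mul_of_forall_ne_zero (fun i j hi hj => ?_) hv hw
    exact eq_normalDeriv_div_mul_of_asymptoticForm hW hρ hρ' ⟨hy.1, hy0⟩
      (hcomp hh y hy i j) (hcomp hh' y hy i j) hi hj
      (fun z hz => hform z (hMset z hz) i j) (fun z hz => hform' z (hMset z hz) i j)

/-- uniqueness of the induced conformal structure on the boundary: two
asymptotic forms `g = C ρ^{−2} dρ² + ρ^{−1} h = C ρ'^{−2} dρ'² + ρ'^{−1} h'` with the same
constant `C ≠ 0` give boundary restrictions of `h` and `h'` differing by a smooth positive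
factor. -/
theorem stmt15 {N : ℕ} [NeZero N] (hN : 2 ≤ N) (U : Set (Fin N → ℝ)) (hU : IsOpen U)
    (hB : (Bdry U).Nonempty)
    (g ginv : (Fin N → ℝ) → Fin N → Fin N → ℝ) (hg : IsMetricOn (Mset U) g ginv)
    (V : Set (Fin N → ℝ)) (hVsub : V ⊆ Uclo U)
    (hVopen : ∃ O : Set (Fin N → ℝ), IsOpen O ∧ V = O ∩ Uclo U)
    (hVconn : IsConnected V) (hVB : (V ∩ Bdry U).Nonempty)
    (C : ℝ) (hC : C ≠ 0)
    (ρ ρ' : (Fin N → ℝ) → ℝ) (hρ : IsDefiningFnOn V ρ) (hρ' : IsDefiningFnOn V ρ')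
    (h h' : (Fin N → ℝ) → Fin N → Fin N → ℝ)
    (hh : ContDiffOn ℝ (⊤ : ℕ∞) h V) (hh' : ContDiffOn ℝ (⊤ : ℕ∞) h' V)
    (hhsym : ∀ y ∈ V, ∀ i j, h y i j = h y j i)
    (hh'sym : ∀ y ∈ V, ∀ i j, h' y i j = h' y j i)
    (hhnd : ∀ y ∈ V, y 0 = 0 → ∀ v : Fin N → ℝ, v 0 = 0 →
      (∀ w : Fin N → ℝ, w 0 = 0 → (∑ i, ∑ j, h y i j * v i * w j) = 0) → v = 0)
    (hh'nd : ∀ y ∈ V, y 0 = 0 → ∀ v : Fin N → ℝ, v 0 = 0 →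
      (∀ w : Fin N → ℝ, w 0 = 0 → (∑ i, ∑ j, h' y i j * v i * w j) = 0) → v = 0)
    (hform : ∀ y ∈ V ∩ Mset U, ∀ i j,
      g y i j = C / (ρ y) ^ 2 * pd i ρ y * pd j ρ y + h y i j / ρ y)
    (hform' : ∀ y ∈ V ∩ Mset U, ∀ i j,
      g y i j = C / (ρ' y) ^ 2 * pd i ρ' y * pd j ρ' y + h' y i j / ρ' y) :
    ∃ f : (Fin N → ℝ) → ℝ, ContDiffOn ℝ (⊤ : ℕ∞) f {y ∈ V | y 0 = 0} ∧
      (∀ y ∈ V, y 0 = 0 → 0 < f y) ∧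
      ∀ y ∈ V, y 0 = 0 → ∀ v w : Fin N → ℝ, v 0 = 0 → w 0 = 0 →
        (∑ i, ∑ j, h' y i j * v i * w j) = f y * ∑ i, ∑ j, h y i j * v i * w j :=
  stmt15_general U hU g V hVopen C ρ ρ' hρ hρ' h h' hh hh' hform hform'
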